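/- For an even set size i with 2 ≤ i ≤ n/2, the probability that a uniformly random perfect matching of [n] contains no edge between a fixed subset S of size i and its complement is at most (2i/(n+i))^{i/2}, and in particular at most (2/3)^{i/2}. -/

import Mathlib

/-!
A matching leaves `S` internally matched exactly when it splits into a matching of `S` and one
of its complement, so the probability is `M(i) M(n - i) / M(n)`, where `M(k)` counts the perfect
matchings of a `k`-set. Conditioning on the partner of a fixed point gives
`M(k + 2) = (k + 1) M(k)`, hence the probability is `∏_{k < i/2} (2k + 1) / (n - i + 2k + 1)`,
and each factor is at most `2i / (n + i)`, which is at most `2/3` when `2i ≤ n`.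
-/

open MeasureTheory

/-- A perfect matching of `Fin n`, encoded as a fixed-point-free involution. -/
def PerfectMatching (n : ℕ) : Type :=
  {σ : Equiv.Perm (Fin n) // (∀ i, σ (σ i) = i) ∧ ∀ i, σ i ≠ i}

instance (n : ℕ) : Fintype (PerfectMatching n) := by
  unfold PerfectMatching; infer_instance

instance (n : ℕ) : MeasurableSpace (PerfectMatching n) := ⊤

/-- The uniform distribution on perfect matchings of `Fin n`. -/
noncomputable def uniformPM (n : ℕ) (h : Nonempty (PerfectMatching n)) :
    Measure (PerfectMatching n) :=
  (@PMF.uniformOfFintype (PerfectMatching n) _ h).toMeasure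

open Equiv

abbrev PerfectMatchingOn (α : Type*) : Type _ :=
  {σ : Perm α // (∀ x, σ (σ x) = x) ∧ ∀ x, σ x ≠ x}

namespace PerfectMatchingOn

variable {α β : Type*}

def congr (e : α ≃ β) : PerfectMatchingOn α ≃ PerfectMatchingOn β :=
  e.permCongr.subtypeEquiv fun σ => by
    simp [permCongr_apply, e.surjective.forall]

theorem forall_mapsTo_iff (σ : PerfectMatchingOn α) (p : α → Prop) :
    (∀ x, p x → p (σ.1 x)) ↔ ∀ x, p (σ.1 x) ↔ p x :=
  ⟨fun h x => ⟨fun hx => σ.2.1 x ▸ h _ hx, h x⟩, fun h x => (h x).2⟩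

def restrict (σ : PerfectMatchingOn α) (p : α → Prop) (hp : ∀ x, p (σ.1 x) ↔ p x) :
    PerfectMatchingOn {x // p x} :=
  ⟨σ.1.subtypePerm hp, fun x => Subtype.ext (σ.2.1 x),
    fun x hx => σ.2.2 x (congrArg Subtype.val hx)⟩

variable {p : α → Prop} [DecidablePred p]

def subtypeCongr (τ : PerfectMatchingOn {x // p x}) (ρ : PerfectMatchingOn {x // ¬p x}) :
    PerfectMatchingOn α :=
  ⟨τ.1.subtypeCongr ρ.1,
    fun x => by by_cases hx : p x <;> simp [hx, τ.2.1, ρ.2.1],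
    fun x => by
      by_cases hx : p x
      · simpa [hx] using fun h => τ.2.2 ⟨x, hx⟩ (Subtype.ext h)
      · simpa [hx] using fun h => ρ.2.2 ⟨x, hx⟩ (Subtype.ext h)⟩

variable (p) in
def invariantEquiv :
    {σ : PerfectMatchingOn α // ∀ x, p (σ.1 x) ↔ p x} ≃
      PerfectMatchingOn {x // p x} × PerfectMatchingOn {x // ¬p x} where
  toFun σ := (σ.1.restrict p σ.2, σ.1.restrict (¬p ·) fun x => not_congr (σ.2 x))
  invFun τρ := ⟨subtypeCongr τρ.1 τρ.2, fun x => by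
    by_cases hx : p x <;> simp [subtypeCongr, hx, (τρ.1.1 _).2, (τρ.2.1 _).2]⟩
  left_inv σ := by
    ext x
    by_cases hx : p x <;> simp [subtypeCongr, restrict, hx]
  right_inv τρ := by
    ext <;> simp [subtypeCongr, restrict]

theorem card_eq_one_of_card_eq_two (h : Nat.card α = 2) :
    Nat.card (PerfectMatchingOn α) = 1 := by
  classical
  obtain ⟨x, y, hxy, huniv⟩ := Nat.card_eq_two_iff.1 h
  have hmem (z : α) : z = x ∨ z = y := by simpa [← huniv] using Set.mem_univ z
  refine Nat.card_eq_one_iff_unique.2 ⟨⟨fun σ τ => ?_⟩, ⟨⟨swap x y, swap_apply_self x y, ?_⟩⟩⟩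
  · ext z
    have hσ := σ.2.2 z
    have hτ := τ.2.2 z
    rcases hmem z with rfl | rfl <;> rcases hmem (σ.1 z) with h1 | h1 <;>
      rcases hmem (τ.1 z) with h2 | h2 <;> simp_all
  · intro z
    rcases hmem z with rfl | rfl
    · simpa using hxy.symm
    · simpa using hxy

end PerfectMatchingOn

noncomputable def matchingCount (n : ℕ) : ℕ := Nat.card (PerfectMatchingOn (Fin n))

theorem matchingCount_two : matchingCount 2 = 1 :=
  PerfectMatchingOn.card_eq_one_of_card_eq_two
    (Nat.card_eq_fintype_card.trans (Fintype.card_fin 2))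

namespace PerfectMatchingOn

variable {α : Type*} [Fintype α]

theorem card_eq_matchingCount : Nat.card (PerfectMatchingOn α) = matchingCount (Fintype.card α) :=
  Nat.card_congr (congr (Fintype.equivFin α))

variable [DecidableEq α]

theorem card_mapsTo (S : Finset α) :
    Nat.card {σ : PerfectMatchingOn α // ∀ x ∈ S, σ.1 x ∈ S} =
      matchingCount S.card * matchingCount (Fintype.card α - S.card) := by
  rw [Nat.card_congr ((Equiv.subtypeEquivRight fun σ => σ.forall_mapsTo_iff (· ∈ S)).trans
      (invariantEquiv (· ∈ S))), Nat.card_prod, card_eq_matchingCount,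
    card_eq_matchingCount, Fintype.card_subtype_compl, Fintype.card_coe]

theorem card_apply_eq {a b : α} (hab : a ≠ b) :
    Nat.card {σ : PerfectMatchingOn α // σ.1 a = b} = matchingCount (Fintype.card α - 2) := by
  -- `σ a = b` exactly when `σ` maps `{a, b}` into itself, and a pair has a unique matching.
  have hfiber (σ : PerfectMatchingOn α) :
      σ.1 a = b ↔ ∀ x ∈ ({a, b} : Finset α), σ.1 x ∈ ({a, b} : Finset α) := by
    simp only [Finset.mem_insert, Finset.mem_singleton, forall_eq_or_imp, forall_eq]
    refine ⟨fun h => ⟨.inr h, .inl (h ▸ σ.2.1 a)⟩, fun h => h.1.resolve_left (σ.2.2 a)⟩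
  rw [Nat.card_congr (Equiv.subtypeEquivRight hfiber), card_mapsTo,
    Finset.card_pair hab, matchingCount_two, one_mul]

theorem card_eq_card_sub_one_mul (a : α) :
    Nat.card (PerfectMatchingOn α) =
      (Fintype.card α - 1) * matchingCount (Fintype.card α - 2) := by
  calc Nat.card (PerfectMatchingOn α)
      = ∑ b ∈ Finset.univ.erase a, Nat.card {σ : PerfectMatchingOn α // σ.1 a = b} := by
        rw [Nat.card_eq_fintype_card, ← Finset.card_univ, Finset.card_eq_sum_card_fiberwise
          fun σ _ => Finset.mem_erase.2 ⟨σ.2.2 a, Finset.mem_univ _⟩]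
        simp only [Nat.card_eq_fintype_card, Fintype.card_subtype]
    _ = ∑ _b ∈ Finset.univ.erase a, matchingCount (Fintype.card α - 2) :=
        Finset.sum_congr rfl fun b hb => card_apply_eq (Finset.ne_of_mem_erase hb).symm
    _ = (Fintype.card α - 1) * matchingCount (Fintype.card α - 2) := by
        simp [Finset.card_erase_of_mem]

end PerfectMatchingOn

theorem matchingCount_zero : matchingCount 0 = 1 :=
  Nat.card_eq_one_iff_unique.2
    ⟨⟨fun _ _ => Subtype.ext (Subsingleton.elim _ _)⟩, ⟨⟨1, nofun, nofun⟩⟩⟩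

theorem matchingCount_add_two (n : ℕ) : matchingCount (n + 2) = (n + 1) * matchingCount n := by
  simpa [matchingCount] using PerfectMatchingOn.card_eq_card_sub_one_mul (0 : Fin (n + 2))

theorem matchingCount_add_two_mul (n m : ℕ) :
    matchingCount (n + 2 * m) = (∏ k ∈ Finset.range m, (n + 2 * k + 1)) * matchingCount n := by
  induction m with
  | zero => simp
  | succ m ih =>
    rw [show n + 2 * (m + 1) = n + 2 * m + 2 by ring, matchingCount_add_two, ih,
      Finset.prod_range_succ]
    ring

theorem matchingCount_two_mul (m : ℕ) :
    matchingCount (2 * m) = ∏ k ∈ Finset.range m, (2 * k + 1) := by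
  simpa [matchingCount_zero] using matchingCount_add_two_mul 0 m

theorem matchingCount_ratio_eq_prod (n m : ℕ) (hn : matchingCount n ≠ 0) :
    (matchingCount (2 * m) * matchingCount n : ℝ) / matchingCount (n + 2 * m) =
      ∏ k ∈ Finset.range m, ((2 * k + 1 : ℝ) / (n + 2 * k + 1)) := by
  rw [matchingCount_two_mul, matchingCount_add_two_mul, Finset.prod_div_distrib]
  push_cast
  exact mul_div_mul_right _ _ (Nat.cast_ne_zero.2 hn)

theorem two_mul_add_one_div_le {n m k : ℕ} (hk : k < m) :
    (2 * k + 1 : ℝ) / (n + 2 * k + 1) ≤ 4 * m / (n + 4 * m) := by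
  have hkm : (2 * k + 1 : ℝ) ≤ 4 * m := by
    have : (k : ℝ) + 1 ≤ m := by exact_mod_cast hk
    linarith
  rw [div_le_div_iff₀ (by positivity) (by linarith)]
  nlinarith [(n.cast_nonneg : (0 : ℝ) ≤ n)]

theorem prod_two_mul_add_one_div_le (n m : ℕ) :
    ∏ k ∈ Finset.range m, ((2 * k + 1 : ℝ) / (n + 2 * k + 1)) ≤
      (4 * m / (n + 4 * m)) ^ m := by
  calc ∏ k ∈ Finset.range m, ((2 * k + 1 : ℝ) / (n + 2 * k + 1))
      ≤ ∏ _k ∈ Finset.range m, (4 * m / (n + 4 * m) : ℝ) :=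
        Finset.prod_le_prod (fun k _ => by positivity)
          fun k hk => two_mul_add_one_div_le (Finset.mem_range.1 hk)
    _ = (4 * m / (n + 4 * m)) ^ m := by rw [Finset.prod_const, Finset.card_range]

theorem uniformPM_toReal_apply (n : ℕ) (h : Nonempty (PerfectMatching n))
    (s : Set (PerfectMatching n)) :
    (uniformPM n h s).toReal = Nat.card s / Nat.card (PerfectMatching n) := by
  classical
  rw [uniformPM, PMF.toMeasure_uniformOfFintype_apply s MeasurableSpace.measurableSet_top,
    ENNReal.toReal_div]
  simp [Nat.card_eq_fintype_card]

theorem matching_isolates_subset_prob_general (n i : ℕ) (h : Nonempty (PerfectMatching n))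
    (S : Finset (Fin n)) (hcard : S.card = i) (hev : Even i)
    (hhalf : 2 * i ≤ n) :
    ((uniformPM n h) {σ : PerfectMatching n | ∀ a ∈ S, σ.1 a ∈ S}).toReal
        ≤ (2 * (i : ℝ) / ((n : ℝ) + i)) ^ ((i : ℝ) / 2) ∧
      ((uniformPM n h) {σ : PerfectMatching n | ∀ a ∈ S, σ.1 a ∈ S}).toReal
        ≤ ((2 : ℝ) / 3) ^ ((i : ℝ) / 2) := by
  obtain ⟨m, rfl⟩ := even_iff_two_dvd.1 hev
  obtain ⟨N, rfl⟩ := Nat.exists_eq_add_of_le' (by omega : 2 * m ≤ n)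
  have hN : matchingCount N ≠ 0 := by
    have hpos : matchingCount (N + 2 * m) ≠ 0 := (Nat.card_pos (α := PerfectMatching _)).ne'
    rw [matchingCount_add_two_mul] at hpos
    exact right_ne_zero_of_mul hpos
  have hprob : ((uniformPM _ h) {σ : PerfectMatching _ | ∀ a ∈ S, σ.1 a ∈ S}).toReal =
      ∏ k ∈ Finset.range m, ((2 * k + 1 : ℝ) / (N + 2 * k + 1)) := by
    have hevent : Nat.card {σ : PerfectMatching _ | ∀ a ∈ S, σ.1 a ∈ S} =
        matchingCount (2 * m) * matchingCount N := by
      calc _ = Nat.card {σ : PerfectMatchingOn (Fin _) // ∀ a ∈ S, σ.1 a ∈ S} := rfl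
        _ = _ := by
          rw [PerfectMatchingOn.card_mapsTo, hcard, Fintype.card_fin, Nat.add_sub_cancel]
    rw [uniformPM_toReal_apply, hevent, Nat.cast_mul, ← matchingCount_ratio_eq_prod N m hN]
    rfl
  have hbase :
      2 * ((2 * m : ℕ) : ℝ) / ((N + 2 * m : ℕ) + (2 * m : ℕ)) = 4 * m / (N + 4 * m) := by
    push_cast; ring
  have hexp : ((2 * m : ℕ) : ℝ) / 2 = m := by push_cast; ring
  have hthirds : (4 * m / (N + 4 * m) : ℝ) ≤ 2 / 3 :=
    div_le_of_le_mul₀ (by positivity) (by positivity) (by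
      have : (2 * m : ℝ) ≤ N := by exact_mod_cast (by omega : 2 * m ≤ N)
      linarith)
  rw [hprob, hbase, hexp, Real.rpow_natCast, Real.rpow_natCast]
  exact ⟨prod_two_mul_add_one_div_le N m,
    (prod_two_mul_add_one_div_le N m).trans (pow_le_pow_left₀ (by positivity) hthirds m)⟩

/-- For an even set size `i` with `2 ≤ i ≤ n/2`, the probability that a
uniformly random perfect matching of `[n]` has no edge between a fixed subset `S` of size `i`
and its complement (i.e. `S` is internally matched) is at most `(2i/(n+i))^{i/2}`, and in
particular at most `(2/3)^{i/2}`. -/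
theorem matching_isolates_subset_prob (n i : ℕ) (h : Nonempty (PerfectMatching n))
    (S : Finset (Fin n)) (hcard : S.card = i) (h2 : 2 ≤ i) (hev : Even i)
    (hhalf : 2 * i ≤ n) :
    ((uniformPM n h) {σ : PerfectMatching n | ∀ a ∈ S, σ.1 a ∈ S}).toReal
        ≤ (2 * (i : ℝ) / ((n : ℝ) + i)) ^ ((i : ℝ) / 2) ∧
      ((uniformPM n h) {σ : PerfectMatching n | ∀ a ∈ S, σ.1 a ∈ S}).toReal
        ≤ ((2 : ℝ) / 3) ^ ((i : ℝ) / 2) :=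
  matching_isolates_subset_prob_general n i h S hcard hev hhalf
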